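/- The convex-splitting implicit Euler step for the discrete gradient-flow u' = −A∇E₁(u) + A∇E₂(u), where A is symmetric positive semidefinite, E₁ convex and E₂ concave (both C¹), given by uⁿ⁺¹ = uⁿ − Δt A(∇E₁(uⁿ⁺¹) − ∇E₂(uⁿ)), satisfies the energy decay E(uⁿ⁺¹) ≤ E(uⁿ) with E = E₁ − E₂, whenever A is invertible and Δt > 0. -/
import Mathlib

open Matrix

/-- Eyre's convex-splitting energy stability: for the implicit Euler step
`uⁿ⁺¹ = uⁿ − Δt A(∇E₁(uⁿ⁺¹) − ∇E₂(uⁿ))` of the gradient flow of `E = E₁ − E₂`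
(`E₁, E₂` convex `C¹`, `A` symmetric positive definite), the energy decays. -/
theorem eyre_convex_splitting_energy_decay
    (n : ℕ) (hn : 1 ≤ n)
    (A : Matrix (Fin n) (Fin n) ℝ) (hAsymm : Aᵀ = A)
    (hA : ∀ x : Fin n → ℝ, x ≠ 0 → 0 < x ⬝ᵥ (A *ᵥ x))
    (E₁ E₂ : (Fin n → ℝ) → ℝ) (g₁ g₂ : (Fin n → ℝ) → (Fin n → ℝ))
    (hE₁ : ConvexOn ℝ Set.univ E₁) (hE₂ : ConvexOn ℝ Set.univ E₂)
    (hg₁ : ∀ x y : Fin n → ℝ, E₁ x + g₁ x ⬝ᵥ (y - x) ≤ E₁ y)   -- gradient inequality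
    (hg₂ : ∀ x y : Fin n → ℝ, E₂ x + g₂ x ⬝ᵥ (y - x) ≤ E₂ y)   -- gradient inequality
    (Δt : ℝ) (hΔt : 0 < Δt)
    (u u' : Fin n → ℝ)
    (hstep : u' = u - Δt • (A *ᵥ (g₁ u' - g₂ u))) :
    E₁ u' - E₂ u' ≤ E₁ u - E₂ u := by
  set w := g₁ u' - g₂ u with hw
  have hd : u' - u = (-Δt) • (A *ᵥ w) := by
    rw [hstep]; ext i; simp [neg_smul]
  have hq : (0:ℝ) ≤ w ⬝ᵥ (A *ᵥ w) := by
    by_cases h0 : w = 0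
    · simp [h0]
    · exact (hA w h0).le
  have hkey : w ⬝ᵥ (u' - u) ≤ 0 := by
    rw [hd, dotProduct_smul, smul_eq_mul]
    nlinarith
  have h1 := hg₁ u' u
  have h2 := hg₂ u u'
  have hsplit : w ⬝ᵥ (u' - u) = g₁ u' ⬝ᵥ (u' - u) - g₂ u ⬝ᵥ (u' - u) := by
    rw [hw, sub_dotProduct]
  have hflip : g₁ u' ⬝ᵥ (u - u') = - (g₁ u' ⬝ᵥ (u' - u)) := by
    rw [← dotProduct_neg]; congr 1; ext i; simp
  linarith
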